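/- There exist a type M, an element z : M, functions s : M → M, f : M → M → M, g : M → M → M, and a predicate P : M → Prop such that: f(x,z) = x for all x; f(x, s(y)) = s(f(x,y)) for all x, y; P(x) implies P(s(x)) for all x; and yet there exist n, x in M with (P(f(x,n)) → P(g(x,n))) and P(x) but not P(g(x,n)). In other words, the sequent S is not a semantic consequence of its antecedent together with the equational theory Ecal. -/

import Mathlib

/- A two-point countermodel: `s = id`, `f = (· && ·)` and `P b ↔ b = true`. The element
`n = false` is not reached from `z = true` by `s`, so induction fails there: `f true false` is
`false`, which makes the premise `P (f x n) → P (g x n)` vacuous for `g = false`. -/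
theorem stmt_3 :
    ∃ (M : Type) (z : M) (s : M → M) (f : M → M → M) (g : M → M → M) (P : M → Prop),
      (∀ x, f x z = x) ∧
      (∀ x y, f x (s y) = s (f x y)) ∧
      (∀ x, P x → P (s x)) ∧
      ∃ n x, (P (f x n) → P (g x n)) ∧ P x ∧ ¬ P (g x n) :=
  ⟨Bool, true, id, (· && ·), fun _ _ => false, (· = true), Bool.and_true, fun _ _ => rfl,
    fun _ => id, false, true, id, rfl, Bool.false_ne_true⟩
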